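/- Assume balayage is possible for (E, Λ), where E ⊆ ℝ^d is closed and Λ ⊆ ℝ̂^d is compact. Then there exists K > 0 such that for every bounded Radon measure μ on ℝ^d, the infimum of ‖ν‖₁ over all bounded Radon measures ν supported in E with ν̂ = μ̂ on Λ is at most K‖μ‖₁. -/

import Mathlib

open MeasureTheory Complex Filter Topology FourierTransform RealInnerProductSpace ENNReal NNReal

noncomputable section

abbrev Rd (d : ℕ) := EuclideanSpace ℝ (Fin d)

/-- The character `x ↦ e^{-2πi x·γ}`. -/
def negChar {d : ℕ} (x γ : Rd d) : ℂ := Complex.exp (-(2 * Real.pi * Complex.I) * (⟪x, γ⟫ : ℝ))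

/-- The character `x ↦ e^{2πi x·γ}`. -/
def posChar {d : ℕ} (x γ : Rd d) : ℂ := Complex.exp ((2 * Real.pi * Complex.I) * (⟪x, γ⟫ : ℝ))

/-- Integration of a (complex-valued) function against a complex measure,
via the Jordan decompositions of its real and imaginary parts. -/
def mInt {d : ℕ} (μ : ComplexMeasure (Rd d)) (f : Rd d → ℂ) : ℂ :=
  ((∫ x, f x ∂(ComplexMeasure.re μ).toJordanDecomposition.posPart) -
    (∫ x, f x ∂(ComplexMeasure.re μ).toJordanDecomposition.negPart)) +
  Complex.I * ((∫ x, f x ∂(ComplexMeasure.im μ).toJordanDecomposition.posPart) -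
    (∫ x, f x ∂(ComplexMeasure.im μ).toJordanDecomposition.negPart))

/-- Fourier transform `μ̂(γ) = ∫ e^{-2πi x·γ} dμ(x)` of a bounded complex measure. -/
def mFourier {d : ℕ} (μ : ComplexMeasure (Rd d)) (γ : Rd d) : ℂ := mInt μ fun x => negChar x γ

/-- Inverse Fourier transform `μ̌(x) = ∫ e^{2πi x·γ} dμ(γ)`. -/
def mInvFourier {d : ℕ} (μ : ComplexMeasure (Rd d)) (x : Rd d) : ℂ := mInt μ fun γ => posChar x γ

/-- Total variation norm (up to equivalence) of a complex measure. -/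
def tvNorm {d : ℕ} (μ : ComplexMeasure (Rd d)) : ℝ :=
  (((ComplexMeasure.re μ).totalVariation Set.univ) +
    ((ComplexMeasure.im μ).totalVariation Set.univ)).toReal

/-- A complex measure is supported in the set `E`. -/
def suppIn {d : ℕ} (μ : ComplexMeasure (Rd d)) (E : Set (Rd d)) : Prop :=
  ∀ s : Set (Rd d), MeasurableSet s → s ∩ E = ∅ → μ s = 0

/-- Balayage is possible for `(E, Λ)`. -/
def BalayagePossible {d : ℕ} (E Λ : Set (Rd d)) : Prop :=
  ∀ μ : ComplexMeasure (Rd d), ∃ ν : ComplexMeasure (Rd d),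
    suppIn ν E ∧ ∀ γ ∈ Λ, mFourier ν γ = mFourier μ γ

/-- `f` has its distributional spectrum (support of `f̂`) contained in `Λ`. -/
def SpectrumIn {d : ℕ} (f : Rd d → ℂ) (Λ : Set (Rd d)) : Prop :=
  ∀ φ : SchwartzMap (Rd d) ℂ, tsupport ⇑φ ⊆ Λᶜ → ∫ x, f x * 𝓕 (⇑φ) x = 0

/-- Membership in `C(Λ)`: bounded continuous with spectrum in `Λ`. -/
def MemCLam {d : ℕ} (f : Rd d → ℂ) (Λ : Set (Rd d)) : Prop :=
  Continuous f ∧ (∃ M : ℝ, ∀ x, ‖f x‖ ≤ M) ∧ SpectrumIn f Λ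

/-- `Λ` is a set of spectral synthesis. -/
def IsSSet {d : ℕ} (Λ : Set (Rd d)) : Prop :=
  ∀ f : Rd d → ℂ, MemCLam f Λ →
    ∀ μ : ComplexMeasure (Rd d), (∀ γ ∈ Λ, mFourier μ γ = 0) → mInt μ f = 0

/-- `Λ` is a set of strict multiplicity. -/
def StrictMultiplicity {d : ℕ} (Λ : Set (Rd d)) : Prop :=
  ∃ μ : ComplexMeasure (Rd d), μ ≠ 0 ∧ suppIn μ Λ ∧
    Tendsto (fun x => ‖mInvFourier μ x‖) (Filter.cocompact (Rd d)) (nhds 0)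

/-- The balayage constant `K(E,Λ)` (as an extended nonnegative real). -/
def Kconst {d : ℕ} (E Λ : Set (Rd d)) : ℝ≥0∞ :=
  sInf {K : ℝ≥0∞ | ∀ μ : ComplexMeasure (Rd d),
    (⨅ ν : {ν : ComplexMeasure (Rd d) // suppIn ν E ∧ ∀ γ ∈ Λ, mFourier ν γ = mFourier μ γ},
      ENNReal.ofReal (tvNorm ν.1)) ≤ K * ENNReal.ofReal (tvNorm μ)}

/-- The comparison constant `J(E,Λ)` (as an extended nonnegative real). -/
def Jconst {d : ℕ} (E Λ : Set (Rd d)) : ℝ≥0∞ :=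
  sInf {J : ℝ≥0∞ | ∀ f : Rd d → ℂ, MemCLam f Λ →
    (⨆ x : Rd d, (‖f x‖₊ : ℝ≥0∞)) ≤ J * ⨆ x : E, (‖f (x : Rd d)‖₊ : ℝ≥0∞)}

/-- `E` is separated. -/
def Separated {d : ℕ} (E : Set (Rd d)) : Prop :=
  ∃ r > 0, ∀ x ∈ E, ∀ y ∈ E, x ≠ y → r ≤ dist x y

/-- The short-time Fourier transform `V_g f(x, ω)`. -/
def STFT {d : ℕ} (g f : Rd d → ℂ) (x ω : Rd d) : ℂ :=
  ∫ t, f t * (starRingEnd ℂ) (g (t - x)) * negChar t ω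

end

/-! Let `S` be the measures supported in `E` and `W` those whose Fourier transform vanishes on `Λ`.
Both are closed subspaces of the Banach space of complex measures, and balayage says precisely that
`S + W` is the whole space. The open mapping theorem for `(s, w) ↦ s + w` on the Banach space
`S × W` then writes every `μ` as `ν + w` with `‖ν‖ ≤ K ‖μ‖`, and `ν` is a balayage of `μ`.
Most of the work is making complex measures a Banach space: a Cauchy sequence converges uniformly
on sets, and countable additivity survives the uniform limit. -/

namespace MeasureTheory

open Set Filter VectorMeasure

variable {α : Type*} [MeasurableSpace α]

namespace VectorMeasure

variable {M : Type*} [AddCommMonoid M] [UniformSpace M] [ContinuousAdd M] [T2Space M]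

def ofTendstoUniformly {ι : Type*} {l : Filter ι} [l.NeBot] (u : ι → VectorMeasure α M)
    (g : Set α → M) (hg : TendstoUniformly (fun i s => u i s) g l) : VectorMeasure α M where
  measureOf' := g
  empty' := tendsto_nhds_unique (hg.tendsto_at ∅) (by simp)
  not_measurable' s hs := tendsto_nhds_unique (hg.tendsto_at s) (by simp [hs])
  m_iUnion' f hf hdisj := by
    have hfin (F : Finset ℕ) : ∑ i ∈ F, g (f i) = g (⋃ i ∈ F, f i) :=
      tendsto_nhds_unique (tendsto_finsetSum F fun i _ => hg.tendsto_at (f i))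
        ((hg.tendsto_at _).congr fun i =>
          of_biUnion_finset (hdisj.set_pairwise _) fun j _ => hf j)
    simp only [HasSum, hfin]
    -- Moore–Osgood: the limit in `i` and the limit along finite partial unions commute.
    refine (hg.comp fun F : Finset ℕ => ⋃ i ∈ F, f i).tendsto_of_eventually_tendsto
      (Eventually.of_forall fun i => ?_) (hg.tendsto_at _)
    exact ((u i).m_iUnion hf hdisj).congr fun F =>
      (of_biUnion_finset (hdisj.set_pairwise _) fun j _ => hf j).symm

end VectorMeasure

namespace SignedMeasure

instance (s : SignedMeasure α) : IsFiniteMeasure s.variation := by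
  rw [← totalVariation_eq_variation]
  infer_instance

lemma abs_apply_le_variation_real_univ (s : SignedMeasure α) (t : Set α) :
    |s t| ≤ s.variation.real univ :=
  (norm_measure_le_variation (μ := s)).trans (measureReal_mono (subset_univ t))

lemma variation_real_univ_add_le (s t : SignedMeasure α) :
    (s + t).variation.real univ ≤ s.variation.real univ + t.variation.real univ := by
  rw [← measureReal_add_apply]
  exact ENNReal.toReal_mono (measure_ne_top _ _) (variation_add_le univ)

lemma variation_real_univ_le_of_forall_abs_apply_le (s : SignedMeasure α) {ε : ℝ}
    (h : ∀ t, MeasurableSet t → |s t| ≤ ε) : s.variation.real univ ≤ 2 * ε := by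
  have hε : 0 ≤ ε := (abs_nonneg _).trans (h ∅ MeasurableSet.empty)
  suffices s.variation univ ≤ ENNReal.ofReal (2 * ε) by
    simpa [measureReal_def, hε] using ENNReal.toReal_le_of_le_ofReal (by positivity) this
  refine le_of_forall_lt fun a ha => ?_
  obtain ⟨t, -, ht, hat⟩ := s.exists_subset_lt_enorm_apply_of_lt_variation MeasurableSet.univ ha
  calc a < 2 * ‖s t‖ₑ := hat
    _ ≤ ENNReal.ofReal (2 * ε) := by
      rw [ENNReal.ofReal_mul zero_le_two, ENNReal.ofReal_ofNat, Real.enorm_eq_ofReal_abs]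
      gcongr
      exact h t ht

variable {E : Type*} [NormedAddCommGroup E] [NormedSpace ℝ E]

lemma integral_eq_integral_posPart_sub_integral_negPart [CompleteSpace E] (s : SignedMeasure α)
    {f : α → E} (hp : Integrable f s.toJordanDecomposition.posPart)
    (hn : Integrable f s.toJordanDecomposition.negPart) :
    ∫ᵛ x, f x ∂<•s =
      ∫ x, f x ∂s.toJordanDecomposition.posPart - ∫ x, f x ∂s.toJordanDecomposition.negPart := by
  conv_lhs => rw [← s.toSignedMeasure_toJordanDecomposition, JordanDecomposition.toSignedMeasure]
  rw [integral_sub_vectorMeasure (by simpa [VectorMeasure.Integrable] using hp)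
      (by simpa [VectorMeasure.Integrable] using hn),
    integral_toSignedMeasure, integral_toSignedMeasure]

lemma norm_integral_le_of_norm_le {f : α → E} {C : ℝ} (hC : ∀ x, ‖f x‖ ≤ C)
    (s : SignedMeasure α) : ‖∫ᵛ x, f x ∂<•s‖ ≤ C * s.variation.real univ := by
  rcases isEmpty_or_nonempty α with hα | ⟨⟨x⟩⟩
  · simp [Subsingleton.elim s 0]
  have hC0 : 0 ≤ C := (norm_nonneg _).trans (hC x)
  refine (VectorMeasure.norm_integral_le_of_norm_le_const (.of_forall hC)).trans ?_
  grw [ContinuousLinearMap.opNorm_flip, ContinuousLinearMap.opNorm_lsmul_le, mul_one]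

end SignedMeasure

namespace ComplexMeasure

lemma norm_apply_le_variation (μ : ComplexMeasure α) (s : Set α) :
    ‖μ s‖ ≤ (re μ).variation.real univ + (im μ).variation.real univ :=
  (Complex.norm_le_abs_re_add_abs_im _).trans <| add_le_add
    ((re μ).abs_apply_le_variation_real_univ s) ((im μ).abs_apply_le_variation_real_univ s)

/-- `‖μ‖ = |re μ|(α) + |im μ|(α)`, which is `tvNorm μ`. It is equivalent to, but not equal to,
the total variation norm `|μ|(α)`, hence only a local instance. -/
noncomputable abbrev normedAddCommGroup : NormedAddCommGroup (ComplexMeasure α) :=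
  AddGroupNorm.toNormedAddCommGroup
    { toFun μ := (re μ).variation.real univ + (im μ).variation.real univ
      map_zero' := by simp [_root_.map_zero re, _root_.map_zero im]
      add_le' μ ν := by
        simp only [_root_.map_add re, _root_.map_add im]
        grw [(re μ).variation_real_univ_add_le, (im μ).variation_real_univ_add_le]
        linarith
      neg' μ := by simp [_root_.map_neg re, _root_.map_neg im]
      eq_zero_of_map_eq_zero' μ h := by
        ext s -
        exact norm_le_zero_iff.1 ((μ.norm_apply_le_variation s).trans h.le) }

end ComplexMeasure

end MeasureTheory

attribute [local instance] MeasureTheory.ComplexMeasure.normedAddCommGroup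

namespace MeasureTheory.ComplexMeasure

open Set Filter VectorMeasure

variable {α : Type*} [MeasurableSpace α]

lemma norm_def (μ : ComplexMeasure α) :
    ‖μ‖ = (re μ).variation.real univ + (im μ).variation.real univ :=
  rfl

lemma norm_apply_le (μ : ComplexMeasure α) (s : Set α) : ‖μ s‖ ≤ ‖μ‖ :=
  μ.norm_apply_le_variation s

lemma norm_le_of_forall_norm_apply_le (μ : ComplexMeasure α) {ε : ℝ}
    (h : ∀ s, MeasurableSet s → ‖μ s‖ ≤ ε) : ‖μ‖ ≤ 4 * ε := by
  have hre := (re μ).variation_real_univ_le_of_forall_abs_apply_le fun s hs =>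
    (Complex.abs_re_le_norm (μ s)).trans (h s hs)
  have him := (im μ).variation_real_univ_le_of_forall_abs_apply_le fun s hs =>
    (Complex.abs_im_le_norm (μ s)).trans (h s hs)
  rw [norm_def]
  linarith

noncomputable abbrev normedSpace : NormedSpace ℝ (ComplexMeasure α) :=
  { (inferInstance : Module ℝ (ComplexMeasure α)) with
    norm_smul_le c μ := by
      simp [norm_def, _root_.map_smul re, _root_.map_smul im, variation_smul, mul_add] }

theorem completeSpace : CompleteSpace (ComplexMeasure α) := by
  refine Metric.complete_of_cauchySeq_tendsto fun u hu => ?_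
  have hunif : UniformCauchySeqOn (fun n s => u n s) atTop univ := by
    rw [Metric.uniformCauchySeqOn_iff]
    intro ε hε
    obtain ⟨N, hN⟩ := Metric.cauchySeq_iff.1 hu ε hε
    refine ⟨N, fun m hm n hn s _ => ?_⟩
    calc dist (u m s) (u n s) = ‖(u m - u n) s‖ := by rw [sub_apply, dist_eq_norm]
      _ ≤ dist (u m) (u n) := by rw [dist_eq_norm]; exact norm_apply_le _ s
      _ < ε := hN m hm n hn
  choose g hg using fun s => cauchySeq_tendsto_of_complete (hunif.cauchySeq (mem_univ s))
  have hgu := tendstoUniformlyOn_univ.1 (hunif.tendstoUniformlyOn_of_tendsto fun s _ => hg s)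
  refine ⟨ofTendstoUniformly u g hgu, Metric.tendsto_atTop.2 fun ε hε => ?_⟩
  obtain ⟨N, hN⟩ := eventually_atTop.1 (Metric.tendstoUniformly_iff.1 hgu (ε / 8) (by positivity))
  refine ⟨N, fun n hn => ?_⟩
  calc dist (u n) (ofTendstoUniformly u g hgu) ≤ 4 * (ε / 8) := by
        rw [dist_eq_norm]
        refine norm_le_of_forall_norm_apply_le _ fun s _ => ?_
        rw [sub_apply, ← dist_eq_norm']
        exact (hN n hn s).le
    _ < ε := by linarith

noncomputable def applyCLM (s : Set α) : ComplexMeasure α →L[ℝ] ℂ :=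
  LinearMap.mkContinuous
    { toFun μ := μ s
      map_add' _ _ := rfl
      map_smul' _ _ := rfl }
    1 fun μ => by rw [one_mul]; exact μ.norm_apply_le s

lemma applyCLM_apply (s : Set α) (μ : ComplexMeasure α) : applyCLM s μ = μ s :=
  rfl

end MeasureTheory.ComplexMeasure

attribute [local instance] MeasureTheory.ComplexMeasure.normedSpace
  MeasureTheory.ComplexMeasure.completeSpace

theorem Submodule.exists_mem_sub_mem_norm_le_of_sup_eq_top {𝕜 X : Type*}
    [NontriviallyNormedField 𝕜] [NormedAddCommGroup X] [NormedSpace 𝕜 X] [CompleteSpace X]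
    {S W : Submodule 𝕜 X} (hS : IsClosed (S : Set X)) (hW : IsClosed (W : Set X))
    (hSW : S ⊔ W = ⊤) : ∃ C > 0, ∀ x, ∃ s ∈ S, x - s ∈ W ∧ ‖s‖ ≤ C * ‖x‖ := by
  have := hS.completeSpace_coe
  have := hW.completeSpace_coe
  have hsurj : Function.Surjective (S.subtypeL.coprod W.subtypeL) := by
    intro x
    obtain ⟨s, hs, w, hw, rfl⟩ := Submodule.mem_sup.1 (hSW ▸ Submodule.mem_top : x ∈ S ⊔ W)
    exact ⟨(⟨s, hs⟩, ⟨w, hw⟩), rfl⟩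
  obtain ⟨C, hC, hpre⟩ := (S.subtypeL.coprod W.subtypeL).exists_preimage_norm_le hsurj
  refine ⟨C, hC, fun x => ?_⟩
  obtain ⟨⟨s, w⟩, rfl, hsw⟩ := hpre x
  refine ⟨s, s.2, ?_, (norm_fst_le (s, w)).trans hsw⟩
  simp

section Fourier

open Set VectorMeasure

variable {d : ℕ} {f : Rd d → ℂ} {C : ℝ}

lemma mInt_eq_integral (hf : StronglyMeasurable f) (hC : ∀ x, ‖f x‖ ≤ C)
    (μ : ComplexMeasure (Rd d)) :
    mInt μ f = ∫ᵛ x, f x ∂<•(ComplexMeasure.re μ) + I * ∫ᵛ x, f x ∂<•(ComplexMeasure.im μ) := by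
  have hint (m : Measure (Rd d)) [IsFiniteMeasure m] : Integrable f m :=
    .of_bound hf.aestronglyMeasurable C (.of_forall hC)
  rw [mInt, SignedMeasure.integral_eq_integral_posPart_sub_integral_negPart _ (hint _) (hint _),
    SignedMeasure.integral_eq_integral_posPart_sub_integral_negPart _ (hint _) (hint _)]

lemma mInt_add (hf : StronglyMeasurable f) (hC : ∀ x, ‖f x‖ ≤ C) (μ ν : ComplexMeasure (Rd d)) :
    mInt (μ + ν) f = mInt μ f + mInt ν f := by
  have hint (s : SignedMeasure (Rd d)) : s.Integrable f :=
    .of_bound hf.aestronglyMeasurable C (.of_forall hC)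
  simp only [mInt_eq_integral hf hC, _root_.map_add ComplexMeasure.re,
    _root_.map_add ComplexMeasure.im, integral_add_vectorMeasure (hint _) (hint _)]
  ring

lemma mInt_smul (hf : StronglyMeasurable f) (hC : ∀ x, ‖f x‖ ≤ C) (c : ℝ)
    (μ : ComplexMeasure (Rd d)) : mInt (c • μ) f = c * mInt μ f := by
  simp only [mInt_eq_integral hf hC, _root_.map_smul ComplexMeasure.re,
    _root_.map_smul ComplexMeasure.im, integral_smul_vectorMeasure, Complex.real_smul]
  ring

lemma norm_mInt_le (hf : StronglyMeasurable f) (hC : ∀ x, ‖f x‖ ≤ C)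
    (μ : ComplexMeasure (Rd d)) : ‖mInt μ f‖ ≤ C * ‖μ‖ := by
  rw [mInt_eq_integral hf hC, ComplexMeasure.norm_def, mul_add]
  grw [norm_add_le, norm_mul, Complex.norm_I, one_mul,
    SignedMeasure.norm_integral_le_of_norm_le hC, SignedMeasure.norm_integral_le_of_norm_le hC]

noncomputable def mIntCLM (f : Rd d → ℂ) (hf : StronglyMeasurable f) (C : ℝ)
    (hC : ∀ x, ‖f x‖ ≤ C) : ComplexMeasure (Rd d) →L[ℝ] ℂ :=
  LinearMap.mkContinuous
    { toFun μ := mInt μ f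
      map_add' := mInt_add hf hC
      map_smul' c μ := by simp [mInt_smul hf hC] }
    C (norm_mInt_le hf hC)

lemma norm_negChar (x γ : Rd d) : ‖negChar x γ‖ = 1 := by
  simp [negChar, Complex.norm_exp]

lemma continuous_negChar (γ : Rd d) : Continuous fun x => negChar x γ := by
  unfold negChar
  fun_prop

noncomputable def fourierCLM (γ : Rd d) : ComplexMeasure (Rd d) →L[ℝ] ℂ :=
  mIntCLM (negChar · γ) (continuous_negChar γ).stronglyMeasurable 1 fun x => (norm_negChar x γ).le

lemma fourierCLM_apply (γ : Rd d) (μ : ComplexMeasure (Rd d)) : fourierCLM γ μ = mFourier μ γ :=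
  rfl

noncomputable def supportedIn (E : Set (Rd d)) : Submodule ℝ (ComplexMeasure (Rd d)) :=
  ⨅ s ∈ {s | MeasurableSet s ∧ s ∩ E = ∅}, (ComplexMeasure.applyCLM s).ker

lemma mem_supportedIn {E : Set (Rd d)} {ν : ComplexMeasure (Rd d)} :
    ν ∈ supportedIn E ↔ suppIn ν E := by
  simp [supportedIn, suppIn, ComplexMeasure.applyCLM_apply]

lemma isClosed_supportedIn (E : Set (Rd d)) :
    IsClosed (supportedIn E : Set (ComplexMeasure (Rd d))) := by
  simp only [supportedIn, Submodule.coe_iInf]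
  exact isClosed_biInter fun s _ => (ComplexMeasure.applyCLM s).isClosed_ker

noncomputable def fourierAnnihilator (Λ : Set (Rd d)) : Submodule ℝ (ComplexMeasure (Rd d)) :=
  ⨅ γ ∈ Λ, (fourierCLM γ).ker

lemma sub_mem_fourierAnnihilator_iff {Λ : Set (Rd d)} {μ ν : ComplexMeasure (Rd d)} :
    μ - ν ∈ fourierAnnihilator Λ ↔ ∀ γ ∈ Λ, mFourier μ γ = mFourier ν γ := by
  simp [fourierAnnihilator, ← fourierCLM_apply, sub_eq_zero]

lemma isClosed_fourierAnnihilator (Λ : Set (Rd d)) :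
    IsClosed (fourierAnnihilator Λ : Set (ComplexMeasure (Rd d))) := by
  simp only [fourierAnnihilator, Submodule.coe_iInf]
  exact isClosed_biInter fun γ _ => (fourierCLM γ).isClosed_ker

lemma BalayagePossible.supportedIn_sup_fourierAnnihilator {E Λ : Set (Rd d)}
    (h : BalayagePossible E Λ) : supportedIn E ⊔ fourierAnnihilator Λ = ⊤ := by
  refine Submodule.eq_top_iff'.2 fun μ => ?_
  obtain ⟨ν, hνE, hν⟩ := h μ
  exact Submodule.mem_sup.2 ⟨ν, mem_supportedIn.2 hνE, μ - ν,
    sub_mem_fourierAnnihilator_iff.2 fun γ hγ => (hν γ hγ).symm, add_sub_cancel _ _⟩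

lemma tvNorm_eq_norm (μ : ComplexMeasure (Rd d)) : tvNorm μ = ‖μ‖ := by
  rw [tvNorm, ComplexMeasure.norm_def, SignedMeasure.totalVariation_eq_variation,
    SignedMeasure.totalVariation_eq_variation,
    ENNReal.toReal_add (measure_ne_top _ _) (measure_ne_top _ _)]
  rfl

end Fourier

theorem stmt1_general {d : ℕ} (E Λ : Set (Rd d))
    (hbal : BalayagePossible E Λ) :
    ∃ K > (0 : ℝ), ∀ μ : ComplexMeasure (Rd d),
      sInf {r : ℝ | ∃ ν : ComplexMeasure (Rd d),
          suppIn ν E ∧ (∀ γ ∈ Λ, mFourier ν γ = mFourier μ γ) ∧ r = tvNorm ν}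
        ≤ K * tvNorm μ := by
  obtain ⟨K, hK, hdecomp⟩ := Submodule.exists_mem_sub_mem_norm_le_of_sup_eq_top
    (isClosed_supportedIn E) (isClosed_fourierAnnihilator Λ)
    hbal.supportedIn_sup_fourierAnnihilator
  refine ⟨K, hK, fun μ => ?_⟩
  obtain ⟨ν, hνE, hμν, hν⟩ := hdecomp μ
  have hbdd : BddBelow {r : ℝ | ∃ ν : ComplexMeasure (Rd d),
      suppIn ν E ∧ (∀ γ ∈ Λ, mFourier ν γ = mFourier μ γ) ∧ r = tvNorm ν} :=
    ⟨0, by rintro _ ⟨ν, -, -, rfl⟩; exact (tvNorm_eq_norm ν).symm ▸ norm_nonneg ν⟩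
  calc _ ≤ tvNorm ν := csInf_le hbdd ⟨ν, mem_supportedIn.1 hνE,
          fun γ hγ => (sub_mem_fourierAnnihilator_iff.1 hμν γ hγ).symm, rfl⟩
    _ ≤ K * tvNorm μ := by rwa [tvNorm_eq_norm, tvNorm_eq_norm]

/-- If balayage is possible for `(E, Λ)` with `E` closed and `Λ` compact, then there is `K > 0`
such that for every bounded measure `μ`, the infimum of the total variation norms of measures
`ν` supported in `E` with `ν̂ = μ̂` on `Λ` is at most `K ‖μ‖₁`. -/
theorem stmt1 {d : ℕ} (E Λ : Set (Rd d)) (hE : IsClosed E) (hΛ : IsCompact Λ)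
    (hbal : BalayagePossible E Λ) :
    ∃ K > (0 : ℝ), ∀ μ : ComplexMeasure (Rd d),
      sInf {r : ℝ | ∃ ν : ComplexMeasure (Rd d),
          suppIn ν E ∧ (∀ γ ∈ Λ, mFourier ν γ = mFourier μ γ) ∧ r = tvNorm ν}
        ≤ K * tvNorm μ :=
  stmt1_general E Λ hbal
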